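/- The function x ↦ j_ν(λx, q²) is an eigenfunction of the q-Bessel operator Δ_{q,ν} with eigenvalue -λ²; that is, Δ_{q,ν}[x ↦ j_ν(λx,q²)](x) = -λ² j_ν(λx,q²) for all x ≠ 0. -/

import Mathlib

open scoped BigOperators
noncomputable section

/-- Infinite q-Pochhammer symbol `(a;q)_∞`. -/
def qPochInf (a q : ℝ) : ℝ := ∏' k : ℕ, (1 - a * q ^ k)

/-- Finite q-Pochhammer symbol `(a;q)_n`. -/
def qPochFin (a q : ℝ) (n : ℕ) : ℝ := ∏ k ∈ Finset.range n, (1 - a * q ^ k)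

/-- Normalized q-Bessel function `j_ν(x, q²)`. -/
def jnu (q ν x : ℝ) : ℝ :=
  ∑' n : ℕ, (-1 : ℝ) ^ n * q ^ (n * (n + 1)) * x ^ (2 * n) /
    (qPochFin (q ^ (2 * ν + 2)) (q ^ 2) n * qPochFin (q ^ 2) (q ^ 2) n)

/-- q-Jackson integral on `(0,∞)`. -/
def qInt (q : ℝ) (f : ℝ → ℝ) : ℝ := (1 - q) * ∑' n : ℤ, q ^ n * f (q ^ n)

/-- The constant `c_{q,ν}`. -/
def cq (q ν : ℝ) : ℝ :=
  qPochInf (q ^ (2 * ν + 2)) (q ^ 2) / ((1 - q) * qPochInf (q ^ 2) (q ^ 2))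

/-- q-Bessel Fourier transform `F_{q,ν}`. -/
def qFT (q ν : ℝ) (f : ℝ → ℝ) (x : ℝ) : ℝ :=
  cq q ν * qInt q (fun t => f t * jnu q ν (x * t) * t ^ (2 * ν + 1))

/-- Membership in `L^p_{q,ν}` (summability of the defining q-integral). -/
def qMemLp (q ν p : ℝ) (f : ℝ → ℝ) : Prop :=
  Summable (fun n : ℤ => q ^ n * |f (q ^ n)| ^ p * ((q : ℝ) ^ n) ^ (2 * ν + 1))

/-- The norm `‖f‖_{q,p,ν}`. -/
def qNorm (q ν p : ℝ) (f : ℝ → ℝ) : ℝ :=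
  (qInt q (fun x => |f x| ^ p * x ^ (2 * ν + 1))) ^ (1 / p)

/-- Inner product `⟨f,g⟩_{q,ν}`. -/
def qInner (q ν : ℝ) (f g : ℝ → ℝ) : ℝ :=
  qInt q (fun x => f x * g x * x ^ (2 * ν + 1))

/-- q-translation operator `T^ν_{q,x}`. -/
def qTrans (q ν x : ℝ) (f : ℝ → ℝ) (y : ℝ) : ℝ :=
  cq q ν * qInt q (fun t => qFT q ν f t * jnu q ν (y * t) * jnu q ν (x * t) * t ^ (2 * ν + 1))

/-- q-convolution product `f *_q g = F_{q,ν}[F_{q,ν}f × F_{q,ν}g]`. -/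
def qConv (q ν : ℝ) (f g : ℝ → ℝ) : ℝ → ℝ :=
  qFT q ν (fun t => qFT q ν f t * qFT q ν g t)

/-- q-Bessel operator `Δ_{q,ν}`. -/
def qBesselOp (q ν : ℝ) (f : ℝ → ℝ) (x : ℝ) : ℝ :=
  (f (x / q) - (1 + q ^ (2 * ν)) * f x + q ^ (2 * ν) * f (q * x)) / x ^ 2

/-! Write `j_ν(λx, q²) = ∑ cₙ (λx)²ⁿ`. The operator `Δ_{q,ν}` acts termwise and sends `t ↦ t^{2m}` to
`q^{-2m} (1 - q^{2m}) (1 - q^{2ν+2m}) t^{2m-2}`, so it kills the constant term, while the recurrence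
`c_{n+1} (1 - q^{2n+2}) (1 - q^{2ν+2n+2}) = -q^{2n+2} cₙ` turns the image of the `(n+1)`-st term into
`-λ²` times the `n`-th term. Termwise application is legitimate because the ratio of consecutive
terms of the series tends to `0`. -/

open Filter Topology

lemma summable_of_succ_eq_smul_of_tendsto_zero {𝕜 E : Type*} [NormedField 𝕜]
    [NormedAddCommGroup E] [NormedSpace 𝕜 E] [CompleteSpace E] {f : ℕ → E} {ρ : ℕ → 𝕜}
    (hf : ∀ n, f (n + 1) = ρ n • f n) (hρ : Tendsto ρ atTop (𝓝 0)) : Summable f := by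
  refine summable_of_ratio_norm_eventually_le (r := 1 / 2) (by norm_num) ?_
  filter_upwards [(tendsto_norm_zero.comp hρ).eventually (ge_mem_nhds one_half_pos)] with n hn
  rw [hf, norm_smul]
  exact mul_le_mul_of_nonneg_right hn (norm_nonneg _)

lemma qBesselOp_tsum {q ν x : ℝ} {f : ℕ → ℝ → ℝ} (h₁ : Summable fun n => f n (x / q))
    (h₂ : Summable fun n => f n x) (h₃ : Summable fun n => f n (q * x)) :
    qBesselOp q ν (fun t => ∑' n, f n t) x = ∑' n, qBesselOp q ν (f n) x := by
  simp only [qBesselOp, tsum_div_const]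
  rw [Summable.tsum_add (h₁.sub (h₂.mul_left _)) (h₃.mul_left _), Summable.tsum_sub h₁ (h₂.mul_left _),
    tsum_mul_left, tsum_mul_left]

lemma qBesselOp_mul_pow {q ν : ℝ} (hq : q ≠ 0) (c lam x : ℝ) (m : ℕ) :
    qBesselOp q ν (fun t => c * (lam * t) ^ (2 * m)) x =
      c * (1 - q ^ (2 * m)) * (1 - q ^ (2 * ν) * q ^ (2 * m)) / q ^ (2 * m) *
        (lam * x) ^ (2 * m) / x ^ 2 := by
  simp only [qBesselOp, mul_pow, div_pow]
  field_simp
  ring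

lemma one_sub_mul_pow_pos {a b : ℝ} (ha₀ : 0 ≤ a) (ha₁ : a < 1) (hb₀ : 0 ≤ b) (hb₁ : b ≤ 1)
    (n : ℕ) : 0 < 1 - a * b ^ n := by
  nlinarith [pow_le_one₀ hb₀ hb₁ (n := n), pow_nonneg hb₀ n]

lemma qPochFin_succ (a q : ℝ) (n : ℕ) :
    qPochFin a q (n + 1) = qPochFin a q n * (1 - a * q ^ n) :=
  Finset.prod_range_succ _ _

lemma qPochFin_pos {a q : ℝ} (ha₀ : 0 ≤ a) (ha₁ : a < 1) (hq₀ : 0 ≤ q) (hq₁ : q ≤ 1) (n : ℕ) :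
    0 < qPochFin a q n :=
  Finset.prod_pos fun k _ => one_sub_mul_pow_pos ha₀ ha₁ hq₀ hq₁ k

def jnuCoeff (q ν : ℝ) (n : ℕ) : ℝ :=
  (-1) ^ n * q ^ (n * (n + 1)) /
    (qPochFin (q ^ (2 * ν + 2)) (q ^ 2) n * qPochFin (q ^ 2) (q ^ 2) n)

lemma jnu_eq_tsum (q ν y : ℝ) : jnu q ν y = ∑' n, jnuCoeff q ν n * y ^ (2 * n) := by
  simp only [jnu, jnuCoeff, div_mul_eq_mul_div]

lemma rpow_two_mul_add_two_mul_sq_pow {q : ℝ} (hq : 0 < q) (ν : ℝ) (n : ℕ) :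
    q ^ (2 * ν + 2) * (q ^ 2) ^ n = q ^ (2 * ν) * q ^ (2 * (n + 1)) := by
  rw [show 2 * ν + 2 = 2 * ν + ((2 : ℕ) : ℝ) by norm_num, Real.rpow_add_natCast hq.ne']
  ring

section

variable {q ν : ℝ} (hq : 0 < q) (hq₁ : q < 1) (hν : -1 < ν)
include hq hq₁ hν

lemma one_sub_rpow_mul_pow_pos (n : ℕ) : 0 < 1 - q ^ (2 * ν) * q ^ (2 * (n + 1)) := by
  rw [← rpow_two_mul_add_two_mul_sq_pow hq]
  exact one_sub_mul_pow_pos (Real.rpow_nonneg hq.le _) (Real.rpow_lt_one hq.le hq₁ (by linarith))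
    (by positivity) (pow_le_one₀ (by positivity) (by nlinarith)) n

lemma jnuCoeff_succ (n : ℕ) :
    jnuCoeff q ν (n + 1) = -q ^ (2 * (n + 1)) * jnuCoeff q ν n /
      ((1 - q ^ (2 * (n + 1))) * (1 - q ^ (2 * ν) * q ^ (2 * (n + 1)))) := by
  have hq₂ : q ^ 2 < 1 := by nlinarith
  have hP₁ : 0 < qPochFin (q ^ (2 * ν + 2)) (q ^ 2) n :=
    qPochFin_pos (Real.rpow_nonneg hq.le _) (Real.rpow_lt_one hq.le hq₁ (by linarith))
      (by positivity) hq₂.le n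
  have hP₂ : 0 < qPochFin (q ^ 2) (q ^ 2) n :=
    qPochFin_pos (by positivity) hq₂ (by positivity) hq₂.le n
  have hF₁ : 0 < 1 - q ^ (2 * (n + 1)) := sub_pos.2 (pow_lt_one₀ hq.le hq₁ (by omega))
  have hF₂ := one_sub_rpow_mul_pow_pos hq hq₁ hν n
  rw [jnuCoeff, jnuCoeff, qPochFin_succ, qPochFin_succ, rpow_two_mul_add_two_mul_sq_pow hq,
    ← pow_succ', ← pow_mul]
  field_simp
  ring

lemma summable_jnuCoeff_mul_pow (y : ℝ) : Summable fun n => jnuCoeff q ν n * y ^ (2 * n) := by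
  have hu : Tendsto (fun n : ℕ => q ^ (2 * (n + 1))) atTop (𝓝 0) := by
    refine ((tendsto_pow_atTop_nhds_zero_of_lt_one (by positivity) (by nlinarith : q ^ 2 < 1)).comp
      (tendsto_add_atTop_nat 1)).congr fun n => ?_
    simp [pow_mul]
  refine summable_of_succ_eq_smul_of_tendsto_zero
    (ρ := fun n => -q ^ (2 * (n + 1)) * y ^ 2 /
      ((1 - q ^ (2 * (n + 1))) * (1 - q ^ (2 * ν) * q ^ (2 * (n + 1))))) (fun n => ?_) ?_
  · rw [jnuCoeff_succ hq hq₁ hν, smul_eq_mul]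
    ring
  · simpa [Pi.div_def] using (hu.neg.mul_const (y ^ 2)).div
      ((tendsto_const_nhds.sub hu).mul (tendsto_const_nhds.sub (hu.const_mul (q ^ (2 * ν)))))
      (by norm_num)

lemma qBesselOp_jnuCoeff_mul_pow_succ {x : ℝ} (hx : x ≠ 0) (lam : ℝ) (n : ℕ) :
    qBesselOp q ν (fun t => jnuCoeff q ν (n + 1) * (lam * t) ^ (2 * (n + 1))) x =
      -lam ^ 2 * (jnuCoeff q ν n * (lam * x) ^ (2 * n)) := by
  have hF₁ : 1 - q ^ (2 * (n + 1)) ≠ 0 := (sub_pos.2 (pow_lt_one₀ hq.le hq₁ (by omega))).ne'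
  have hF₂ := (one_sub_rpow_mul_pow_pos hq hq₁ hν n).ne'
  rw [qBesselOp_mul_pow hq.ne', jnuCoeff_succ hq hq₁ hν, mul_comm (q ^ (2 * ν))]
  rw [mul_comm (q ^ (2 * ν))] at hF₂
  field_simp
  ring

end

theorem q_bessel_eigenfunction (q ν lam : ℝ) (hq : 0 < q) (hq1 : q < 1) (hν : -1 < ν)
    (x : ℝ) (hx : x ≠ 0) :
    qBesselOp q ν (fun t => jnu q ν (lam * t)) x = -lam ^ 2 * jnu q ν (lam * x) := by
  have hsum := summable_jnuCoeff_mul_pow hq hq1 hν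
  simp only [jnu_eq_tsum]
  rw [qBesselOp_tsum (f := fun n t => jnuCoeff q ν n * (lam * t) ^ (2 * n)) (hsum _) (hsum _) (hsum _)]
  have hterm := qBesselOp_jnuCoeff_mul_pow_succ hq hq1 hν hx lam
  set Δterm := fun n => qBesselOp q ν (fun t => jnuCoeff q ν n * (lam * t) ^ (2 * n)) x
  have hshift : Summable fun n => Δterm (n + 1) := (summable_congr hterm).2 ((hsum _).mul_left _)
  have hzero : Δterm 0 = 0 := by simp [Δterm, qBesselOp_mul_pow hq.ne']
  rw [tsum_eq_zero_add' hshift, hzero, zero_add, tsum_congr hterm, tsum_mul_left]
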